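/- arXiv:2103.03771 — 9 statements merged into one kernel-verified Lean document; each statement's English description precedes it below -/
import Mathlib

section
/- Let G be a DAG on [p]. For distinct nodes i, j, k: (1) i and j are adjacent in G if and only if c_G({i,j}) = 1; (2) i → j ← k is an induced v-structure in G if and only if c_G({i,j,k}) = 1 and c_G({i,k}) = 0. -/
open scoped Classical

/-- A directed acyclic graph on vertex set `Fin p`. -/
structure DAGraph (p : ℕ) where
  E : Fin p → Fin p → Prop
  acyclic : ∀ i, ¬ Relation.TransGen E i i

/-- The characteristic imset of a directed graph given by the relation `E`. -/
noncomputable def imsetRel {p : ℕ} (E : Fin p → Fin p → Prop) (S : Finset (Fin p)) : ℝ :=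
  if ∃ i ∈ S, ∀ j ∈ S, j ≠ i → E j i then 1 else 0

/-- The skeleton (underlying undirected graph) of a DAG. -/
def DAGraph.skeleton {p : ℕ} (G : DAGraph p) : SimpleGraph (Fin p) where
  Adj a b := G.E a b ∨ G.E b a
  symm := ⟨fun a b h => Or.symm h⟩
  loopless := ⟨fun a h =>
    h.elim (fun h' => G.acyclic a (Relation.TransGen.single h'))
      (fun h' => G.acyclic a (Relation.TransGen.single h'))⟩

/-- The characteristic imset of a DAG. -/
noncomputable def DAGraph.cim {p : ℕ} (G : DAGraph p) : Finset (Fin p) → ℝ := imsetRel G.E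

/-- `G.vStruct a b c` : `a → b ← c` is a v-structure (with `a`, `c` non-adjacent). -/
def DAGraph.vStruct {p : ℕ} (G : DAGraph p) (a b c : Fin p) : Prop :=
  a ≠ c ∧ G.E a b ∧ G.E c b ∧ ¬ G.skeleton.Adj a c

/-- The relation obtained from `E` by reversing the single edge `i → j`. -/
def reverseRel {p : ℕ} (E : Fin p → Fin p → Prop) (i j : Fin p) : Fin p → Fin p → Prop :=
  fun a b => (E a b ∧ ¬(a = i ∧ b = j)) ∨ (a = j ∧ b = i)

section imsetRel

variable {p : ℕ} (E : Fin p → Fin p → Prop)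

lemma imsetRel_eq_one_iff (S : Finset (Fin p)) :
    imsetRel E S = 1 ↔ ∃ i ∈ S, ∀ j ∈ S, j ≠ i → E j i := by
  unfold imsetRel
  split_ifs with h <;> simp [h]

lemma imsetRel_eq_zero_iff (S : Finset (Fin p)) : imsetRel E S = 0 ↔ imsetRel E S ≠ 1 := by
  unfold imsetRel
  split_ifs <;> norm_num

lemma imsetRel_pair_eq_one_iff {a b : Fin p} (hab : a ≠ b) :
    imsetRel E {a, b} = 1 ↔ E a b ∨ E b a := by
  simp [imsetRel_eq_one_iff, hab, hab.symm, or_comm]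

lemma imsetRel_triple_eq_one_iff {a b c : Fin p} (hab : a ≠ b) (hac : a ≠ c) (hbc : b ≠ c) :
    imsetRel E {a, b, c} = 1 ↔ E b a ∧ E c a ∨ E a b ∧ E c b ∨ E a c ∧ E b c := by
  simp [imsetRel_eq_one_iff, hab, hac, hbc, hab.symm, hac.symm, hbc.symm]

end imsetRel

lemma DAGraph.skeleton_adj_iff {p : ℕ} (G : DAGraph p) {a b : Fin p} :
    G.skeleton.Adj a b ↔ G.E a b ∨ G.E b a :=
  Iff.rfl

/-- For a DAG `G` on `[p]` and distinct nodes `i, j, k`: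
(1) `i` and `j` are adjacent iff `c_G({i,j}) = 1`;
(2) `i → j ← k` is an induced v-structure iff `c_G({i,j,k}) = 1` and `c_G({i,k}) = 0`. -/
theorem stmt2 {p : ℕ} (G : DAGraph p) (i j k : Fin p)
    (hij : i ≠ j) (hik : i ≠ k) (hjk : j ≠ k) :
    (G.skeleton.Adj i j ↔ G.cim {i, j} = 1) ∧
      (G.vStruct i j k ↔ (G.cim {i, j, k} = 1 ∧ G.cim {i, k} = 0)) := by
  simp only [DAGraph.vStruct, DAGraph.skeleton_adj_iff, DAGraph.cim, imsetRel_eq_zero_iff, ne_eq,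
    imsetRel_pair_eq_one_iff _ hij, imsetRel_pair_eq_one_iff _ hik,
    imsetRel_triple_eq_one_iff _ hij hik hjk]
  -- A sink of {i, j, k} other than j would make i and k adjacent.
  tauto
end

section
/- Let H = ([p], E) and H' = ([p], E') be undirected graphs with E ⊆ E'. Then the convex hull of the set of characteristic imsets c_G of DAGs G whose skeleton ([p], D) satisfies E ⊆ D ⊆ E' is a face of the characteristic imset polytope CIM_p. -/
open scoped Classical

/-- The set of characteristic imsets of all DAGs on `p` nodes. -/
noncomputable def cimVertices (p : ℕ) : Set (Finset (Fin p) → ℝ) :=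
  {x | ∃ G : DAGraph p, x = G.cim}

/-- The characteristic imset polytope `CIM_p`. -/
noncomputable def cimPolytope (p : ℕ) : Set (Finset (Fin p) → ℝ) :=
  convexHull ℝ (cimVertices p)

/-- Dot product of vectors indexed by subsets of `[p]`. -/
noncomputable def dotF {p : ℕ} (w x : Finset (Fin p) → ℝ) : ℝ :=
  ∑ S : Finset (Fin p), w S * x S

/-- `F` is a face of `P`: the set of maximizers of some linear functional over `P`. -/
def IsFaceOf {p : ℕ} (F P : Set (Finset (Fin p) → ℝ)) : Prop :=
  ∃ (w : Finset (Fin p) → ℝ) (a : ℝ), (∀ x ∈ P, dotF w x ≤ a) ∧ F = {x ∈ P | dotF w x = a}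

/-- The segment between distinct `u` and `v` is an edge (one-dimensional face) of `P`. -/
def IsEdgeOf {p : ℕ} (u v : Finset (Fin p) → ℝ) (P : Set (Finset (Fin p) → ℝ)) : Prop :=
  u ≠ v ∧ ∃ (w : Finset (Fin p) → ℝ) (a : ℝ), (∀ x ∈ P, dotF w x ≤ a) ∧
    {x ∈ P | dotF w x = a} = segment ℝ u v

/-!
Take the linear functional `w = 1_{E(H)} - 1_{non-edges of H'}`, supported on the 2-subsets.
On 2-subsets the characteristic imset `c_G` is the indicator of the skeleton `D` of `G`, so
`w ⬝ c_G = |E(H) ∩ D| - |D \ E(H')| ≤ |E(H)|`, with equality exactly when `E(H) ⊆ D ⊆ E(H')`.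
The maximizers of a linear functional on the convex hull of a set are the convex hull of its
maximizers in the set, so the maximal face of `w` on `CIM_p` is the convex hull in question.
-/

section Convex

variable {𝕜 E : Type*} [Field 𝕜] [LinearOrder 𝕜] [IsStrictOrderedRing 𝕜] [AddCommGroup E]
  [Module 𝕜 E]

theorem convexHull_sep_eq_of_le (f : E →ₗ[𝕜] 𝕜) {s : Set E} {a : 𝕜}
    (hs : ∀ x ∈ s, f x ≤ a) :
    {x ∈ convexHull 𝕜 s | f x = a} = convexHull 𝕜 {x ∈ s | f x = a} := by
  refine Set.Subset.antisymm ?_ (convexHull_min (fun x hx => ⟨subset_convexHull 𝕜 s hx.1, hx.2⟩)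
    ((convex_convexHull 𝕜 s).inter (convex_hyperplane f.isLinear a)))
  rintro x ⟨hx, hfx⟩
  rw [convexHull_eq] at hx
  obtain ⟨ι, t, w, z, hw₀, hw₁, hz, rfl⟩ := hx
  have hgap : ∑ i ∈ t, w i * (a - f (z i)) = 0 := by
    rw [← hfx, Finset.centerMass_eq_of_sum_1 _ _ hw₁]
    simp only [mul_sub, Finset.sum_sub_distrib, ← Finset.sum_mul, hw₁, one_mul, map_sum,
      map_smul, smul_eq_mul, sub_self]
  have hmax : ∀ i ∈ t, w i ≠ 0 → f (z i) = a := fun i hi hwi => by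
    have := (Finset.sum_eq_zero_iff_of_nonneg fun j hj =>
      mul_nonneg (hw₀ j hj) (sub_nonneg.2 (hs _ (hz j hj)))).1 hgap i hi
    linarith [(mul_eq_zero.1 this).resolve_left hwi]
  rw [← Finset.centerMass_filter_ne_zero]
  refine Finset.centerMass_mem_convexHull _ (fun i hi => hw₀ i (Finset.mem_filter.1 hi).1)
    (by rw [Finset.sum_filter_ne_zero, hw₁]; exact one_pos) fun i hi => ?_
  obtain ⟨hi, hwi⟩ := Finset.mem_filter.1 hi
  exact ⟨hz i hi, hmax i hi hwi⟩

end Convex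

namespace SimpleGraph

variable {V : Type*}

theorem isNClique_two_pair_iff [DecidableEq V] {K : SimpleGraph V} {i j : V} (hij : i ≠ j) :
    K.IsNClique 2 {i, j} ↔ K.Adj i j := by
  rw [isNClique_iff, Finset.coe_pair, isClique_pair, Finset.card_pair hij]
  exact ⟨fun h => h.1 hij, fun h => ⟨fun _ => h, rfl⟩⟩

theorem ext_of_isNClique_two_iff [DecidableEq V] {A B : SimpleGraph V}
    (h : ∀ S : Finset V, A.IsNClique 2 S ↔ B.IsNClique 2 S) : A = B := by
  ext i j
  rcases eq_or_ne i j with rfl | hij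
  · simp
  · rw [← isNClique_two_pair_iff hij, ← isNClique_two_pair_iff hij, h]

/-- The edges `ij` of `K` are read as the 2-subsets `{i, j}`, i.e. as the 2-cliques of `K`. -/
noncomputable def edgeIndicator (K : SimpleGraph V) (S : Finset V) : ℝ :=
  if K.IsNClique 2 S then 1 else 0

theorem edgeIndicator_pair [DecidableEq V] (K : SimpleGraph V) {i j : V} (hij : i ≠ j) :
    K.edgeIndicator {i, j} = if K.Adj i j then 1 else 0 := by
  simp only [edgeIndicator, isNClique_two_pair_iff hij]

theorem edgeIndicator_mono {A B : SimpleGraph V} (h : A ≤ B) (S : Finset V) :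
    A.edgeIndicator S ≤ B.edgeIndicator S := by
  unfold edgeIndicator
  by_cases hA : A.IsNClique 2 S
  · simp [hA, hA.mono h]
  · split_ifs <;> norm_num

theorem edgeIndicator_bot (S : Finset V) : (⊥ : SimpleGraph V).edgeIndicator S = 0 := by
  simp [edgeIndicator, isNClique_bot_iff]

theorem edgeIndicator_injective : Function.Injective (edgeIndicator (V := V)) := by
  classical
  intro A B h
  refine ext_of_isNClique_two_iff fun S => ?_
  have hS := congrFun h S
  unfold edgeIndicator at hS
  split_ifs at hS with hA hB <;> first | tauto | norm_num at hS

theorem sum_edgeIndicator_mono [Fintype V] :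
    Monotone fun K : SimpleGraph V => ∑ S, K.edgeIndicator S :=
  fun _ _ h => Finset.sum_le_sum fun S _ => edgeIndicator_mono h S

theorem sum_edgeIndicator_eq_iff_of_le [Fintype V] {A B : SimpleGraph V} (h : A ≤ B) :
    ∑ S, A.edgeIndicator S = ∑ S, B.edgeIndicator S ↔ A = B := by
  rw [Finset.sum_eq_sum_iff_of_le fun S _ => edgeIndicator_mono h S]
  simp only [Finset.mem_univ, true_implies]
  exact ⟨fun h' => edgeIndicator_injective (funext h'), fun h' _ => h' ▸ rfl⟩

end SimpleGraph

namespace DAGraph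

variable {p : ℕ}

theorem cim_pair (G : DAGraph p) {i j : Fin p} (hij : i ≠ j) :
    G.cim {i, j} = if G.skeleton.Adj i j then 1 else 0 := by
  refine if_congr ?_ rfl rfl
  simp [skeleton, hij, hij.symm, or_comm]

theorem edgeIndicator_mul_cim (K : SimpleGraph (Fin p)) (G : DAGraph p) (S : Finset (Fin p)) :
    K.edgeIndicator S * G.cim S = (K ⊓ G.skeleton).edgeIndicator S := by
  by_cases hK : K.IsNClique 2 S
  · obtain ⟨i, j, hij, rfl⟩ := Finset.card_eq_two.1 hK.card_eq
    rw [K.edgeIndicator_pair hij, cim_pair G hij, SimpleGraph.edgeIndicator_pair _ hij,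
      SimpleGraph.inf_adj]
    split_ifs <;> simp_all
  · have hKD : ¬ (K ⊓ G.skeleton).IsNClique 2 S := fun h => hK (h.mono inf_le_left)
    simp [SimpleGraph.edgeIndicator, hK, hKD]

end DAGraph

section Face

variable {p : ℕ}

open SimpleGraph

noncomputable def skeletonFaceWeight (H H' : SimpleGraph (Fin p)) : Finset (Fin p) → ℝ :=
  H.edgeIndicator - H'ᶜ.edgeIndicator

theorem dotF_skeletonFaceWeight_cim (H H' : SimpleGraph (Fin p)) (G : DAGraph p) :
    dotF (skeletonFaceWeight H H') G.cim =
      ∑ S, (H ⊓ G.skeleton).edgeIndicator S - ∑ S, (H'ᶜ ⊓ G.skeleton).edgeIndicator S := by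
  simp only [dotF, skeletonFaceWeight, Pi.sub_apply, sub_mul, Finset.sum_sub_distrib,
    DAGraph.edgeIndicator_mul_cim]

theorem dotF_skeletonFaceWeight_cim_le (H H' : SimpleGraph (Fin p)) (G : DAGraph p) :
    dotF (skeletonFaceWeight H H') G.cim ≤ ∑ S, H.edgeIndicator S := by
  have hH := sum_edgeIndicator_mono (inf_le_left : H ⊓ G.skeleton ≤ H)
  have hH' := sum_edgeIndicator_mono (bot_le : ⊥ ≤ H'ᶜ ⊓ G.skeleton)
  simp only [edgeIndicator_bot, Finset.sum_const_zero] at hH'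
  rw [dotF_skeletonFaceWeight_cim]
  linarith

theorem dotF_skeletonFaceWeight_cim_eq_iff (H H' : SimpleGraph (Fin p)) (G : DAGraph p) :
    dotF (skeletonFaceWeight H H') G.cim = ∑ S, H.edgeIndicator S ↔
      H ≤ G.skeleton ∧ G.skeleton ≤ H' := by
  have hH := sum_edgeIndicator_mono (inf_le_left : H ⊓ G.skeleton ≤ H)
  have hH' := sum_edgeIndicator_mono (bot_le : ⊥ ≤ H'ᶜ ⊓ G.skeleton)
  have hH_eq := sum_edgeIndicator_eq_iff_of_le (inf_le_left : H ⊓ G.skeleton ≤ H)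
  have hH'_eq := sum_edgeIndicator_eq_iff_of_le (bot_le : ⊥ ≤ H'ᶜ ⊓ G.skeleton)
  rw [inf_eq_left] at hH_eq
  rw [@eq_comm _ ⊥, ← disjoint_iff, disjoint_compl_left_iff] at hH'_eq
  simp only [edgeIndicator_bot, Finset.sum_const_zero] at hH' hH'_eq
  rw [dotF_skeletonFaceWeight_cim, ← hH_eq, ← hH'_eq]
  constructor
  · intro h
    constructor <;> linarith
  · rintro ⟨h₁, h₂⟩
    linarith

end Face

theorem stmt3_general {p : ℕ} (H H' : SimpleGraph (Fin p)) :
    IsFaceOf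
      (convexHull ℝ {x | ∃ G : DAGraph p, H ≤ G.skeleton ∧ G.skeleton ≤ H' ∧ x = G.cim})
      (cimPolytope p) := by
  -- `dotF w` as a linear map: `dotF w x` and `w ⬝ᵥ x` agree by definition.
  let f := dotProductBilin ℝ ℝ (skeletonFaceWeight H H')
  have hvert : ∀ x ∈ cimVertices p, f x ≤ ∑ S, H.edgeIndicator S := by
    rintro _ ⟨G, rfl⟩
    exact dotF_skeletonFaceWeight_cim_le H H' G
  refine ⟨skeletonFaceWeight H H', ∑ S, H.edgeIndicator S,
    fun x hx => convexHull_min hvert (convex_halfSpace_le f.isLinear _) hx, ?_⟩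
  show _ = {x ∈ convexHull ℝ (cimVertices p) | f x = _}
  rw [convexHull_sep_eq_of_le f hvert]
  congr 1
  ext x
  constructor
  · rintro ⟨G, hH, hH', rfl⟩
    exact ⟨⟨G, rfl⟩, (dotF_skeletonFaceWeight_cim_eq_iff H H' G).2 ⟨hH, hH'⟩⟩
  · rintro ⟨⟨G, rfl⟩, hG⟩
    obtain ⟨hH, hH'⟩ := (dotF_skeletonFaceWeight_cim_eq_iff H H' G).1 hG
    exact ⟨G, hH, hH', rfl⟩

/-- For undirected graphs `H ≤ H'` on `[p]`, the convex hull of the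
characteristic imsets of DAGs whose skeleton `D` satisfies `H ≤ D ≤ H'` is a face of `CIM_p`. -/
theorem stmt3 {p : ℕ} (H H' : SimpleGraph (Fin p)) (hle : H ≤ H') :
    IsFaceOf
      (convexHull ℝ {x | ∃ G : DAGraph p, H ≤ G.skeleton ∧ G.skeleton ≤ H' ∧ x = G.cim})
      (cimPolytope p) :=
  stmt3_general H H'
end

section
/- Suppose G and H are DAGs on [p] with c_H = c_G + e_{S*} for some S* ⊆ [p] with |S*| ≥ 2 (an 'addition'). Then either |S*| = 2, say S* = {i,j}, every v-structure of H is a v-structure of G, and the skeletons of G and H differ exactly by the edge {i,j}; or |S*| = 3, say S* = {i,j,k}, G and H have the same skeleton, and H has exactly one v-structure not in G, namely one of the form i → k ← j on the set S*. In particular |S*| ≤ 3 always holds. -/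
open scoped Classical

/-! If `c_G(T) = 1` and `z ∈ T` has no children inside `T` (such a `z` exists by acyclicity), then
`z` is the vertex witnessing `c_G(T) = 1`. For an addition `c_H = c_G + e_S` with `|S| ≥ 4`, let
`m` witness `c_H(S) = 1` and let `z ∈ S` have no `G`-children in `S`: for every `y ∈ S` the set
`{m, y, z}` is a proper subset of `S` on which `c_H`, hence `c_G`, equals 1, which forces `y → z`
in `G`, so `c_G(S) = 1`, a contradiction. For `|S| ≤ 3`, the values on pairs record the skeleton
and the values on triples the v-structures. -/

namespace DAGraph

variable {p : ℕ}

lemma ne_of_E (G : DAGraph p) {a b : Fin p} (h : G.E a b) : a ≠ b := by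
  rintro rfl
  exact G.acyclic a (.single h)

lemma cim_eq_zero_or_eq_one (G : DAGraph p) (T : Finset (Fin p)) : G.cim T = 0 ∨ G.cim T = 1 := by
  unfold cim imsetRel
  split_ifs <;> simp

lemma cim_eq_one_iff (G : DAGraph p) (T : Finset (Fin p)) :
    G.cim T = 1 ↔ ∃ i ∈ T, ∀ j ∈ T, j ≠ i → G.E j i := by
  unfold cim imsetRel
  split_ifs with h <;> simp [h]

lemma exists_sink (G : DAGraph p) {T : Finset (Fin p)} (hT : T.Nonempty) :
    ∃ z ∈ T, ∀ y ∈ T, ¬ G.E z y := by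
  let r : Fin p → Fin p → Prop := flip (Relation.TransGen G.E)
  have : IsTrans (Fin p) r := ⟨fun _ _ _ h₁ h₂ => h₂.trans h₁⟩
  have : Std.Irrefl r := ⟨G.acyclic⟩
  obtain ⟨z, hz, hmin⟩ := (Finite.wellFounded_of_trans_of_irrefl r).has_min (T : Set (Fin p)) hT
  exact ⟨z, hz, fun y hy hzy => hmin y hy (.single hzy)⟩

lemma cim_eq_one_iff_of_sink (G : DAGraph p) {T : Finset (Fin p)} {z : Fin p} (hz : z ∈ T)
    (hsink : ∀ y ∈ T, ¬ G.E z y) : G.cim T = 1 ↔ ∀ j ∈ T, j ≠ z → G.E j z := by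
  refine ⟨fun h => ?_, fun h => (G.cim_eq_one_iff T).2 ⟨z, hz, h⟩⟩
  obtain ⟨i, hi, hpar⟩ := (G.cim_eq_one_iff T).1 h
  obtain rfl | hiz := eq_or_ne i z
  · exact hpar
  · exact absurd (hpar z hz hiz.symm) (hsink i hi)

lemma cim_eq_one_of_isClique (G : DAGraph p) {T : Finset (Fin p)} (hT : T.Nonempty)
    (hclique : G.skeleton.IsClique (T : Set (Fin p))) : G.cim T = 1 := by
  obtain ⟨z, hz, hsink⟩ := G.exists_sink hT
  refine (G.cim_eq_one_iff_of_sink hz hsink).2 fun j hj hjz => ?_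
  exact (hclique hj hz hjz).resolve_right (hsink j hj)

lemma cim_pair_eq_one_iff (G : DAGraph p) {a b : Fin p} (hab : a ≠ b) :
    G.cim {a, b} = 1 ↔ G.skeleton.Adj a b := by
  rw [cim_eq_one_iff]
  simp only [Finset.mem_insert, Finset.mem_singleton, exists_eq_or_imp, forall_eq_or_imp,
    exists_eq_left, forall_eq, skeleton]
  aesop

lemma vStruct_of_cim_triple (G : DAGraph p) {a b c : Fin p} (hab : a ≠ b) (hbc : b ≠ c)
    (hac : a ≠ c) (h : G.cim {a, b, c} = 1) (hnadj : ¬ G.skeleton.Adj a c) :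
    G.vStruct a b c := by
  obtain ⟨i, hi, hpar⟩ := (G.cim_eq_one_iff _).1 h
  simp only [Finset.mem_insert, Finset.mem_singleton] at hi
  rcases hi with rfl | rfl | rfl
  · exact absurd (Or.inr (hpar c (by simp) hac.symm)) hnadj
  · exact ⟨hac, hpar a (by simp) hab, hpar c (by simp) hbc.symm, hnadj⟩
  · exact absurd (Or.inl (hpar a (by simp) hac)) hnadj

lemma vStruct.cim_triple {G : DAGraph p} {a b c : Fin p} (h : G.vStruct a b c) :
    G.cim {a, b, c} = 1 := by
  obtain ⟨-, hab, hcb, -⟩ := h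
  refine (G.cim_eq_one_iff _).2 ⟨b, by simp, fun j hj hjb => ?_⟩
  simp only [Finset.mem_insert, Finset.mem_singleton] at hj
  rcases hj with rfl | rfl | rfl
  exacts [hab, absurd rfl hjb, hcb]

lemma vStruct.card_triple {G : DAGraph p} {a b c : Fin p} (h : G.vStruct a b c) :
    ({a, b, c} : Finset (Fin p)).card = 3 :=
  Finset.card_eq_three.2 ⟨a, b, c, G.ne_of_E h.2.1, h.1, (G.ne_of_E h.2.2.1).symm, rfl⟩

lemma vStruct.of_cim_triple {G H : DAGraph p} {a b c : Fin p} (h : G.vStruct a b c)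
    (hH : H.cim {a, b, c} = 1) (hnadj : ¬ H.skeleton.Adj a c) : H.vStruct a b c :=
  H.vStruct_of_cim_triple (G.ne_of_E h.2.1) (G.ne_of_E h.2.2.1).symm h.1 hH hnadj

def IsAddition (G H : DAGraph p) (S : Finset (Fin p)) : Prop :=
  ∀ T : Finset (Fin p), H.cim T = G.cim T + if T = S then 1 else 0

namespace IsAddition

variable {G H : DAGraph p} {S : Finset (Fin p)}

lemma cim_eq_one_iff (h : IsAddition G H S) {T : Finset (Fin p)} (hT : T ≠ S) :
    H.cim T = 1 ↔ G.cim T = 1 := by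
  simp [h T, hT]

lemma cim_target (h : IsAddition G H S) : H.cim S = 1 ∧ G.cim S ≠ 1 := by
  have hS := h S
  rw [if_pos rfl] at hS
  rcases G.cim_eq_zero_or_eq_one S with hG | hG
  · exact ⟨by linarith, by norm_num [hG]⟩
  · rcases H.cim_eq_zero_or_eq_one S with hH | hH <;> linarith

lemma cim_eq_one_of_cim_eq_one (h : IsAddition G H S) {T : Finset (Fin p)} (hG : G.cim T = 1) :
    H.cim T = 1 := by
  obtain rfl | hT := eq_or_ne T S
  · exact h.cim_target.1
  · exact (h.cim_eq_one_iff hT).2 hG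

lemma adj_iff (h : IsAddition G H S) {a b : Fin p} (hab : a ≠ b)
    (hS : ({a, b} : Finset (Fin p)) ≠ S) : G.skeleton.Adj a b ↔ H.skeleton.Adj a b := by
  rw [← G.cim_pair_eq_one_iff hab, ← H.cim_pair_eq_one_iff hab, h.cim_eq_one_iff hS]

lemma skeleton_le (h : IsAddition G H S) : G.skeleton ≤ H.skeleton := fun a b hab => by
  have hne := G.skeleton.ne_of_adj hab
  rw [← G.cim_pair_eq_one_iff hne] at hab
  exact (H.cim_pair_eq_one_iff hne).1 (h.cim_eq_one_of_cim_eq_one hab)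

lemma card_le_three (h : IsAddition G H S) : S.card ≤ 3 := by
  obtain ⟨hH, hG⟩ := h.cim_target
  by_contra! hcard
  obtain ⟨m, hm, hmpar⟩ := (H.cim_eq_one_iff S).1 hH
  obtain ⟨z, hz, hzsink⟩ := G.exists_sink ⟨m, hm⟩
  refine hG ((G.cim_eq_one_iff_of_sink hz hzsink).2 fun y hy hyz => ?_)
  have hsub : ({m, y, z} : Finset (Fin p)) ⊆ S := by
    simp [Finset.insert_subset_iff, hm, hy, hz]
  have hne : ({m, y, z} : Finset (Fin p)) ≠ S := by
    rintro hT
    have := Finset.card_le_three (a := m) (b := y) (c := z)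
    rw [hT] at this
    omega
  have hHT : H.cim {m, y, z} = 1 :=
    (H.cim_eq_one_iff _).2 ⟨m, by simp, fun j hj hjm => hmpar j (hsub hj) hjm⟩
  exact (G.cim_eq_one_iff_of_sink (by simp) fun x hx => hzsink x (hsub hx)).1
    ((h.cim_eq_one_iff hne).1 hHT) y (by simp) hyz

lemma edge_addition (h : IsAddition G H S) (hcard : S.card = 2) :
    ∃ i j : Fin p, i ≠ j ∧ S = {i, j} ∧
      (∀ a b c, H.vStruct a b c → G.vStruct a b c) ∧
      ¬ G.skeleton.Adj i j ∧ H.skeleton.Adj i j ∧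
      (∀ a b : Fin p, a ≠ b → ({a, b} : Finset (Fin p)) ≠ S →
        (G.skeleton.Adj a b ↔ H.skeleton.Adj a b)) := by
  obtain ⟨hH, hG⟩ := h.cim_target
  obtain ⟨i, j, hij, rfl⟩ := Finset.card_eq_two.1 hcard
  refine ⟨i, j, hij, rfl, fun a b c hv => ?_, fun hadj => hG ((G.cim_pair_eq_one_iff hij).2 hadj),
    (H.cim_pair_eq_one_iff hij).1 hH, fun a b hab hS => h.adj_iff hab hS⟩
  have hne : ({a, b, c} : Finset (Fin p)) ≠ {i, j} := fun hT => by
    have := hv.card_triple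
    rw [hT] at this
    omega
  exact hv.of_cim_triple ((h.cim_eq_one_iff hne).1 hv.cim_triple)
    fun hac => hv.2.2.2 (h.skeleton_le hac)

lemma vStructure_addition (h : IsAddition G H S) (hcard : S.card = 3) :
    G.skeleton = H.skeleton ∧ ∃ i j k : Fin p, S = {i, j, k} ∧
      H.vStruct i k j ∧ ¬ G.vStruct i k j ∧
      (∀ a b c, G.vStruct a b c → H.vStruct a b c) ∧
      (∀ a b c, H.vStruct a b c → (G.vStruct a b c ∨ ({a, b, c} : Finset (Fin p)) = S)) := by
  obtain ⟨hH, hG⟩ := h.cim_target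
  have hskel : G.skeleton = H.skeleton := by
    ext a b
    obtain rfl | hab := eq_or_ne a b
    · simp
    · refine h.adj_iff hab fun hS => ?_
      have := Finset.card_le_two (a := a) (b := b)
      rw [hS] at this
      omega
  obtain ⟨k, hk, hpar⟩ := (H.cim_eq_one_iff S).1 hH
  obtain ⟨i, j, hij, hrest⟩ := Finset.card_eq_two.1
    (by rw [Finset.card_erase_of_mem hk, hcard] : (S.erase k).card = 2)
  have hi : i ∈ S.erase k := by simp [hrest]
  have hj : j ∈ S.erase k := by simp [hrest]
  have hS : S = {i, j, k} := by
    rw [← Finset.insert_erase hk, hrest, Finset.insert_comm, Finset.pair_comm]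
  have hik := hpar i (Finset.mem_of_mem_erase hi) (Finset.ne_of_mem_erase hi)
  have hjk := hpar j (Finset.mem_of_mem_erase hj) (Finset.ne_of_mem_erase hj)
  have hnadj : ¬ G.skeleton.Adj i j := fun hadj => hG <| G.cim_eq_one_of_isClique ⟨k, hk⟩ <| by
    rw [hskel] at hadj
    rw [hS, hskel]
    simpa [SimpleGraph.isClique_insert, skeleton, hik, hjk] using fun _ => hadj
  refine ⟨hskel, i, j, k, hS, ⟨hij, hik, hjk, hskel ▸ hnadj⟩, fun hv => ?_,
    fun a b c hv => hv.of_cim_triple (h.cim_eq_one_of_cim_eq_one hv.cim_triple) (hskel ▸ hv.2.2.2),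
    fun a b c hv => ?_⟩
  · rw [hS, Finset.pair_comm] at hG
    exact hG hv.cim_triple
  · by_cases hT : ({a, b, c} : Finset (Fin p)) = S
    · exact .inr hT
    · exact .inl (hv.of_cim_triple ((h.cim_eq_one_iff hT).1 hv.cim_triple) (hskel ▸ hv.2.2.2))

end IsAddition

end DAGraph

/-- Characterization of additions: if `c_H = c_G + e_{S*}` with `|S*| ≥ 2`,
then either `|S*| = 2` (an edge addition) or `|S*| = 3` (a v-structure addition), with the
stated graphical descriptions. In particular `|S*| ≤ 3`. -/
theorem stmt5 {p : ℕ} (G H : DAGraph p) (Sstar : Finset (Fin p)) (hS : 2 ≤ Sstar.card)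
    (hadd : ∀ T : Finset (Fin p), H.cim T = G.cim T + (if T = Sstar then 1 else 0)) :
    (Sstar.card = 2 ∧ ∃ i j : Fin p, i ≠ j ∧ Sstar = {i, j} ∧
        (∀ a b c, H.vStruct a b c → G.vStruct a b c) ∧
        ¬ G.skeleton.Adj i j ∧ H.skeleton.Adj i j ∧
        (∀ a b : Fin p, a ≠ b → ({a, b} : Finset (Fin p)) ≠ Sstar →
          (G.skeleton.Adj a b ↔ H.skeleton.Adj a b)))
    ∨
    (Sstar.card = 3 ∧ G.skeleton = H.skeleton ∧ ∃ i j k : Fin p, Sstar = {i, j, k} ∧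
        H.vStruct i k j ∧ ¬ G.vStruct i k j ∧
        (∀ a b c, G.vStruct a b c → H.vStruct a b c) ∧
        (∀ a b c, H.vStruct a b c →
          (G.vStruct a b c ∨ ({a, b, c} : Finset (Fin p)) = Sstar))) := by
  have h : G.IsAddition H Sstar := hadd
  obtain h2 | h3 : Sstar.card = 2 ∨ Sstar.card = 3 := by
    have := h.card_le_three
    omega
  · exact .inl ⟨h2, h.edge_addition h2⟩
  · exact .inr ⟨h3, h.vStructure_addition h3⟩
end

section
/- Let G be a DAG containing the edge i → j and suppose G_{i←j} (the graph obtained from G by reversing this single edge) is also acyclic. If pa_G(i) = pa_G(j) \ {i}, then G and G_{i←j} have the same characteristic imset, i.e., they are Markov equivalent. -/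
open scoped Classical

/-!
A set `S` has characteristic-imset value 1 exactly when some `v ∈ S` has every other element
of `S` as a parent. Reversing `i → j` only changes the parent sets of `i` and `j`; if such a
`v` is `j` and `i ∈ S`, then `i` takes over its role after the reversal, because
`pa(i) = pa(j) \ {i}`. The converse direction is the same argument applied to the reversed
graph, in which `j → i` is again an edge of this kind.
-/

section reverseRel

variable {p : ℕ} {E : Fin p → Fin p → Prop} {i j : Fin p}

theorem reverseRel_reverseRel (hij : E i j) (hji : ¬ E j i) :
    reverseRel (reverseRel E i j) j i = E := by
  funext a b
  apply propext
  unfold reverseRel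
  constructor
  · rintro (⟨⟨hab, -⟩ | ⟨rfl, rfl⟩, hn⟩ | ⟨rfl, rfl⟩)
    exacts [hab, absurd ⟨rfl, rfl⟩ hn, hij]
  · intro hab
    by_cases h : a = i ∧ b = j
    · exact Or.inr h
    · exact Or.inl ⟨Or.inl ⟨hab, h⟩, fun ⟨ha, hb⟩ => hji (ha ▸ hb ▸ hab)⟩

theorem reverseRel_parent_iff (hij : E i j) (hji : ¬ E j i)
    (hpa : ∀ k, E k i ↔ E k j ∧ k ≠ i) :
    ∀ k, reverseRel E i j k j ↔ reverseRel E i j k i ∧ k ≠ j := by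
  have hne : i ≠ j := fun h => hji (h ▸ hij)
  intro k
  unfold reverseRel
  constructor
  · rintro (⟨hk, hki⟩ | ⟨-, rfl⟩)
    · have hGki : E k i := (hpa k).2 ⟨hk, fun h => hki ⟨h, rfl⟩⟩
      exact ⟨Or.inl ⟨hGki, fun h => hne h.2⟩, fun h => hji (h ▸ hGki)⟩
    · exact absurd rfl hne
  · rintro ⟨⟨hk, -⟩ | ⟨rfl, -⟩, hkj⟩
    · exact Or.inl ⟨((hpa k).1 hk).1, fun h => ((hpa k).1 hk).2 h.1⟩
    · exact absurd rfl hkj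

theorem exists_reverseRel_parents_of_exists (hpa : ∀ k, E k i ↔ E k j ∧ k ≠ i)
    {S : Finset (Fin p)} (hS : ∃ v ∈ S, ∀ u ∈ S, u ≠ v → E u v) :
    ∃ w ∈ S, ∀ u ∈ S, u ≠ w → reverseRel E i j u w := by
  obtain ⟨v, hv, hdom⟩ := hS
  by_cases hvj : v = j
  · subst hvj
    by_cases hiS : i ∈ S
    · refine ⟨i, hiS, fun u hu hui => ?_⟩
      by_cases huv : u = v
      · exact Or.inr ⟨huv, rfl⟩
      · exact Or.inl ⟨(hpa u).2 ⟨hdom u hu huv, hui⟩, fun h => hui h.1⟩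
    · exact ⟨v, hv, fun u hu huv => Or.inl ⟨hdom u hu huv, fun h => hiS (h.1 ▸ hu)⟩⟩
  · exact ⟨v, hv, fun u hu huv => Or.inl ⟨hdom u hu huv, fun h => hvj h.2⟩⟩

theorem imsetRel_reverseRel (hij : E i j) (hji : ¬ E j i)
    (hpa : ∀ k, E k i ↔ E k j ∧ k ≠ i) :
    imsetRel (reverseRel E i j) = imsetRel E := by
  funext S
  unfold imsetRel
  congr 1
  apply propext
  constructor
  · intro hS
    rw [← reverseRel_reverseRel hij hji]
    exact exists_reverseRel_parents_of_exists (reverseRel_parent_iff hij hji hpa) hS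
  · exact exists_reverseRel_parents_of_exists hpa

end reverseRel

/-- If `G` has the edge `i → j`, the reversal `G_{i←j}` is acyclic
(witnessed by the DAG `H`), and `pa_G(i) = pa_G(j) \ {i}`, then `G` and `G_{i←j}` have the
same characteristic imset, i.e., they are Markov equivalent. -/
theorem stmt6 {p : ℕ} (G H : DAGraph p) (i j : Fin p) (hij : G.E i j)
    (hH : ∀ a b, H.E a b ↔ reverseRel G.E i j a b)
    (hpa : {k | G.E k i} = {k | G.E k j} \ {i}) :
    G.cim = H.cim := by
  have hji : ¬ G.E j i := fun h => G.acyclic i ((Relation.TransGen.single hij).tail h)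
  have hHE : H.E = reverseRel G.E i j := funext₂ fun a b => propext (hH a b)
  rw [DAGraph.cim, DAGraph.cim, hHE, imsetRel_reverseRel hij hji fun k => Set.ext_iff.mp hpa k]
end

section
/- Let G be a DAG with edge i → j such that reversing it yields a DAG G_{i←j}. Then c_{G_{i←j}} = c_G + Σ_{S ∈ A⁺} e_S − Σ_{S ∈ A⁻} e_S, where A⁺ = {S ∪ {i,j} : S ⊆ pa_G(i)} \ {S ∪ {i,j} : S ⊆ pa_G(j)} and A⁻ = {S ∪ {i,j} : S ⊆ pa_G(j)} \ {S ∪ {i,j} : S ⊆ pa_G(i)}. -/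
open scoped Classical

/-
Only the edge between `i` and `j` changes, so the imsets of `G` and `H` can differ only at
sets `T` containing both `i` and `j`. For such `T`, a sink of `T` other than `i`, `j` is a sink
in both graphs; in `G` the vertex `i` is never a sink of `T` and `j` is one iff
`T \ {i, j} ⊆ pa_G(j)`, while in `H` the roles of `i` and `j` are exchanged. Acyclicity of `G`
forbids a sink outside `{i, j}` together with `T \ {i, j} ⊆ pa_G(i)` or `⊆ pa_G(j)`, and the
remaining case analysis is the claimed formula.
-/

theorem ite_or_eq_ite_or_add_ite_sub_ite {R : Type*} [Ring R] {C P Q : Prop}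
    [Decidable (C ∨ P)] [Decidable (C ∨ Q)] [Decidable (P ∧ ¬Q)] [Decidable (Q ∧ ¬P)]
    (hP : C → ¬P) (hQ : C → ¬Q) :
    (if C ∨ P then (1 : R) else 0)
      = (if C ∨ Q then 1 else 0) + (if P ∧ ¬Q then 1 else 0) - (if Q ∧ ¬P then 1 else 0) := by
  by_cases hC : C <;> by_cases hP' : P <;> by_cases hQ' : Q <;> simp_all

theorem Finset.exists_union_pair_iff {α : Type*} [DecidableEq α] {r : α → Prop}
    {T : Finset α} {i j : α} :
    (∃ S : Finset α, (∀ k ∈ S, r k) ∧ T = S ∪ {i, j}) ↔ i ∈ T ∧ j ∈ T ∧ ∀ m ∈ T \ {i, j}, r m := by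
  constructor
  · rintro ⟨S, hS, rfl⟩
    refine ⟨by simp, by simp, fun m hm => ?_⟩
    simp only [Finset.mem_sdiff, Finset.mem_union] at hm
    exact hS m (hm.1.resolve_right hm.2)
  · rintro ⟨hi, hj, hr⟩
    exact ⟨T \ {i, j}, hr, (Finset.sdiff_union_of_subset (Finset.insert_subset hi (by simpa))).symm⟩

section ImsetRel

variable {p : ℕ} {E E' : Fin p → Fin p → Prop} {T : Finset (Fin p)} {i j : Fin p}

theorem imsetRel_congr (h : ∀ a ∈ T, ∀ b ∈ T, a ≠ b → (E a b ↔ E' a b)) :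
    imsetRel E T = imsetRel E' T := by
  unfold imsetRel
  congr 1
  exact propext <| exists_congr fun k => and_congr_right fun hk =>
    forall₂_congr fun m hm => forall_congr' fun hmk => h m hm k hk hmk

theorem imsetRel_of_mem_of_mem (hi : i ∈ T) (hj : j ∈ T) (hij : E i j) (hji : ¬E j i) :
    imsetRel E T = if (∃ k ∈ T \ {i, j}, ∀ m ∈ T, m ≠ k → E m k) ∨ ∀ m ∈ T \ {i, j}, E m j
      then 1 else 0 := by
  unfold imsetRel
  congr 1
  refine propext ⟨?_, ?_⟩
  · rintro ⟨k, hk, hsink⟩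
    by_cases hki : k = i
    · subst hki
      exact absurd (hsink j hj fun h => hji (h ▸ hij)) hji
    by_cases hkj : k = j
    · subst hkj
      refine Or.inr fun m hm => ?_
      simp only [Finset.mem_sdiff, Finset.mem_insert, Finset.mem_singleton, not_or] at hm
      exact hsink m hm.1 hm.2.2
    · exact Or.inl ⟨k, by simp [hk, hki, hkj], hsink⟩
  · rintro (⟨k, hk, hsink⟩ | hpar)
    · exact ⟨k, (Finset.mem_sdiff.1 hk).1, hsink⟩
    · refine ⟨j, hj, fun m hm hmj => ?_⟩
      by_cases hmi : m = i
      · exact hmi ▸ hij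
      · exact hpar m (by simp [hm, hmi, hmj])

theorem reverseRel_iff_of_ne {a b : Fin p} (h : ¬(a = i ∧ b = j)) (h' : ¬(a = j ∧ b = i)) :
    reverseRel E i j a b ↔ E a b := by
  simp [reverseRel, h, h']

theorem imsetRel_reverseRel_of_not_mem_and_mem (hT : ¬(i ∈ T ∧ j ∈ T)) :
    imsetRel (reverseRel E i j) T = imsetRel E T :=
  imsetRel_congr fun a ha b hb _ =>
    reverseRel_iff_of_ne (by rintro ⟨rfl, rfl⟩; exact hT ⟨ha, hb⟩)
      (by rintro ⟨rfl, rfl⟩; exact hT ⟨hb, ha⟩)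

theorem imsetRel_reverseRel_of_mem_of_mem (hi : i ∈ T) (hj : j ∈ T) (hij : E i j)
    (hji : ¬E j i) :
    imsetRel (reverseRel E i j) T
      = if (∃ k ∈ T \ {i, j}, ∀ m ∈ T, m ≠ k → E m k) ∨ ∀ m ∈ T \ {i, j}, E m i
        then 1 else 0 := by
  have hne : i ≠ j := fun h => hji (h ▸ hij)
  rw [imsetRel_of_mem_of_mem hj hi (Or.inr ⟨rfl, rfl⟩) (by simp [reverseRel, hne, hne.symm]),
    Finset.pair_comm]
  congr 1
  refine propext (or_congr (exists_congr fun k => and_congr_right fun hk => ?_)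
    (forall₂_congr fun m hm => ?_))
  · simp only [Finset.mem_sdiff, Finset.mem_insert, Finset.mem_singleton, not_or] at hk
    exact forall₂_congr fun m _ => forall_congr' fun _ =>
      reverseRel_iff_of_ne (fun h => hk.2.2 h.2) (fun h => hk.2.1 h.2)
  · simp only [Finset.mem_sdiff, Finset.mem_insert, Finset.mem_singleton, not_or] at hm
    exact reverseRel_iff_of_ne (fun h => hne h.2) (fun h => hm.2.2 h.1)

end ImsetRel

namespace DAGraph

variable {p : ℕ} (G : DAGraph p)

theorem asymm {a b : Fin p} (h : G.E a b) : ¬G.E b a :=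
  fun h' => G.acyclic a (.head h (.single h'))

theorem not_forall_edge_of_exists_sink {T U : Finset (Fin p)} {v : Fin p} (hvT : v ∈ T)
    (hvU : v ∉ U) (hsink : ∃ k ∈ U, ∀ m ∈ T, m ≠ k → G.E m k) : ¬∀ m ∈ U, G.E m v := by
  obtain ⟨k, hkU, hk⟩ := hsink
  exact fun hpar => G.asymm (hpar k hkU) (hk v hvT fun h => hvU (h ▸ hkU))

end DAGraph

/-- Reversing the edge `i → j` of a DAG `G` (to obtain a DAG `H`) changes
the characteristic imset by `+ ∑_{S ∈ A⁺} e_S − ∑_{S ∈ A⁻} e_S`, where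
`A⁺ = {S ∪ {i,j} : S ⊆ pa_G(i)} \ {S ∪ {i,j} : S ⊆ pa_G(j)}` and
`A⁻ = {S ∪ {i,j} : S ⊆ pa_G(j)} \ {S ∪ {i,j} : S ⊆ pa_G(i)}`. -/
theorem stmt7 {p : ℕ} (G H : DAGraph p) (i j : Fin p) (hij : G.E i j)
    (hH : ∀ a b, H.E a b ↔ reverseRel G.E i j a b) :
    ∀ T : Finset (Fin p),
      H.cim T = G.cim T
        + (if (∃ S : Finset (Fin p), (∀ k ∈ S, G.E k i) ∧ T = S ∪ {i, j}) ∧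
              ¬ (∃ S : Finset (Fin p), (∀ k ∈ S, G.E k j) ∧ T = S ∪ {i, j}) then 1 else 0)
        - (if (∃ S : Finset (Fin p), (∀ k ∈ S, G.E k j) ∧ T = S ∪ {i, j}) ∧
              ¬ (∃ S : Finset (Fin p), (∀ k ∈ S, G.E k i) ∧ T = S ∪ {i, j}) then 1 else 0) := by
  intro T
  have hHE : H.E = reverseRel G.E i j := funext₂ fun a b => propext (hH a b)
  simp only [DAGraph.cim, hHE, Finset.exists_union_pair_iff]
  by_cases hT : i ∈ T ∧ j ∈ T
  · obtain ⟨hi, hj⟩ := hT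
    have hji := G.asymm hij
    rw [imsetRel_reverseRel_of_mem_of_mem hi hj hij hji, imsetRel_of_mem_of_mem hi hj hij hji]
    simp only [hi, hj, true_and]
    exact ite_or_eq_ite_or_add_ite_sub_ite
      (G.not_forall_edge_of_exists_sink hi (by simp))
      (G.not_forall_edge_of_exists_sink hj (by simp))
  · rw [imsetRel_reverseRel_of_not_mem_and_mem hT, if_neg fun h => hT ⟨h.1.1, h.1.2.1⟩,
      if_neg fun h => hT ⟨h.1.1, h.1.2.1⟩]
    ring
end

section
/- Let G be a DAG on [p] and let i, j be non-adjacent vertices of G such that adding the edge j → i yields a DAG G_{+j→i}. Then c_{G_{+j→i}} = c_G + Σ_{S ⊆ pa_G(i)} e_{S ∪ {i,j}}; in particular {G, G_{+j→i}} is an edge pair with respect to (i, j, pa_G(i)). -/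
open scoped Classical

/-- `{G, H}` is an *edge pair* with respect to `(i, j, S*)`. -/
noncomputable def EdgePair {p : ℕ} (G H : DAGraph p) (i j : Fin p)
    (Sstar : Finset (Fin p)) : Prop :=
  G.cim {i, j} = 0 ∧
  (∀ S ⊆ Sstar, S.Nonempty → G.cim (insert i S) = 1) ∧
  ∀ T : Finset (Fin p),
    H.cim T = G.cim T + (if ∃ S ⊆ Sstar, T = S ∪ {i, j} then 1 else 0)

/-!
Adding `j → i` to `G` can only create new "sinks" at `i`, so the characteristic imsets of `G`
and `G_{+j→i}` agree except on the sets `T ∋ i, j` whose other members are all `G`-parents of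
`i`, i.e. on `T = S ∪ {i, j}` with `S ⊆ pa_G(i)`. On such `T` the new graph has `i` as a sink,
while `G` has no sink at all: `i` and `j` are non-adjacent, and a parent `x` of `i` cannot also
be a child of `i` by acyclicity.
-/

open Finset

def addEdgeRel {p : ℕ} (E : Fin p → Fin p → Prop) (j i : Fin p) : Fin p → Fin p → Prop :=
  fun a b => E a b ∨ (a = j ∧ b = i)

theorem DAGraph.asymm_s8 {p : ℕ} (G : DAGraph p) {a b : Fin p} (hab : G.E a b) : ¬ G.E b a :=
  fun hba => G.acyclic a (.head hab (.single hba))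

section imsetRel

variable {p : ℕ} {E : Fin p → Fin p → Prop} {i j : Fin p} {S T : Finset (Fin p)}

theorem imsetRel_eq_one {x : Fin p} (hx : x ∈ T) (hsink : ∀ k ∈ T, k ≠ x → E k x) :
    imsetRel E T = 1 :=
  if_pos ⟨x, hx, hsink⟩

theorem imsetRel_eq_zero (h : ∀ x ∈ T, ∃ k ∈ T, k ≠ x ∧ ¬ E k x) : imsetRel E T = 0 :=
  if_neg fun ⟨x, hx, hsink⟩ =>
    let ⟨k, hk, hkx, hE⟩ := h x hx
    hE (hsink k hk hkx)

theorem imsetRel_insert_of_parents (hS : ∀ k ∈ S, E k i) : imsetRel E (insert i S) = 1 :=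
  imsetRel_eq_one (mem_insert_self i S) fun k hk hki =>
    hS k ((mem_insert.1 hk).resolve_left hki)

theorem imsetRel_addEdgeRel_union_pair (hS : ∀ k ∈ S, E k i) :
    imsetRel (addEdgeRel E j i) (S ∪ {i, j}) = 1 := by
  have hSj : ∀ k ∈ insert j S, addEdgeRel E j i k i := by
    simp only [mem_insert, forall_eq_or_imp]
    exact ⟨Or.inr ⟨rfl, rfl⟩, fun k hk => Or.inl (hS k hk)⟩
  rw [show S ∪ {i, j} = insert i (insert j S) by ext; simp]
  exact imsetRel_insert_of_parents hSj

theorem imsetRel_union_pair_of_parents (hasymm : ∀ a b, E a b → ¬ E b a) (hij : i ≠ j)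
    (hEij : ¬ E i j) (hEji : ¬ E j i) (hS : ∀ k ∈ S, E k i) :
    imsetRel E (S ∪ {i, j}) = 0 := by
  have hi : i ∈ S ∪ {i, j} := by simp
  have hj : j ∈ S ∪ {i, j} := by simp
  refine imsetRel_eq_zero fun x hx => ?_
  by_cases hxi : x = i
  · exact ⟨j, hj, hxi ▸ hij.symm, hxi ▸ hEji⟩
  by_cases hxj : x = j
  · exact ⟨i, hi, hxj ▸ hij, hxj ▸ hEij⟩
  have hxS : x ∈ S := by simpa [hxi, hxj] using hx
  exact ⟨i, hi, Ne.symm hxi, hasymm x i (hS x hxS)⟩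

theorem imsetRel_addEdgeRel_of_not_union_pair
    (hT : ¬ ∃ S : Finset (Fin p), (∀ k ∈ S, E k i) ∧ T = S ∪ {i, j}) :
    imsetRel (addEdgeRel E j i) T = imsetRel E T := by
  refine if_congr ⟨fun ⟨x, hx, hsink⟩ => ⟨x, hx, fun k hk hkx => ?_⟩,
    fun ⟨x, hx, hsink⟩ => ⟨x, hx, fun k hk hkx => .inl (hsink k hk hkx)⟩⟩ rfl rfl
  by_contra hE
  -- the sink `x` is `i`, and `k` is `j`
  obtain ⟨rfl, rfl⟩ := (hsink k hk hkx).resolve_left hE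
  refine hT ⟨T \ {x, k}, fun m hm => ?_, ?_⟩
  · simp only [mem_sdiff, mem_insert, mem_singleton, not_or] at hm
    exact (hsink m hm.1 hm.2.1).resolve_right fun h => hm.2.2 h.1
  · rw [sdiff_union_self_eq_union, union_eq_left.2 (insert_subset hx (singleton_subset_iff.2 hk))]

theorem imsetRel_addEdgeRel (hasymm : ∀ a b, E a b → ¬ E b a) (hij : i ≠ j)
    (hEij : ¬ E i j) (hEji : ¬ E j i) (T : Finset (Fin p)) :
    imsetRel (addEdgeRel E j i) T = imsetRel E T +
      if ∃ S : Finset (Fin p), (∀ k ∈ S, E k i) ∧ T = S ∪ {i, j} then 1 else 0 := by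
  split_ifs with hT
  · obtain ⟨S, hS, rfl⟩ := hT
    rw [imsetRel_addEdgeRel_union_pair hS, imsetRel_union_pair_of_parents hasymm hij hEij hEji hS]
    norm_num
  · rw [imsetRel_addEdgeRel_of_not_union_pair hT, add_zero]

end imsetRel

/-- For non-adjacent `i, j` in a DAG `G`, if adding the edge `j → i`
yields a DAG `H = G_{+j→i}`, then `c_H = c_G + ∑_{S ⊆ pa_G(i)} e_{S ∪ {i,j}}`; in
particular `{G, H}` is an edge pair with respect to `(i, j, pa_G(i))`. -/
theorem stmt8 {p : ℕ} (G H : DAGraph p) (i j : Fin p) (hij : i ≠ j)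
    (hnadj : ¬ G.skeleton.Adj i j)
    (hH : ∀ a b, H.E a b ↔ (G.E a b ∨ (a = j ∧ b = i))) :
    (∀ T : Finset (Fin p),
        H.cim T = G.cim T +
          (if ∃ S : Finset (Fin p), (∀ k ∈ S, G.E k i) ∧ T = S ∪ {i, j} then 1 else 0)) ∧
      EdgePair G H i j (Finset.univ.filter fun k => G.E k i) := by
  have hHE : H.E = addEdgeRel G.E j i := funext₂ fun a b => propext (hH a b)
  have hEij : ¬ G.E i j := fun h => hnadj (Or.inl h)
  have hEji : ¬ G.E j i := fun h => hnadj (Or.inr h)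
  have hasymm : ∀ a b, G.E a b → ¬ G.E b a := fun _ _ => G.asymm_s8
  have hcim : ∀ T : Finset (Fin p), H.cim T = G.cim T +
      (if ∃ S : Finset (Fin p), (∀ k ∈ S, G.E k i) ∧ T = S ∪ {i, j} then 1 else 0) := by
    simpa only [DAGraph.cim, hHE] using imsetRel_addEdgeRel hasymm hij hEij hEji
  refine ⟨hcim, ?_, fun S hS _ => ?_, fun T => ?_⟩
  · simpa [DAGraph.cim] using imsetRel_union_pair_of_parents hasymm hij hEij hEji (S := ∅) (by simp)
  · exact imsetRel_insert_of_parents fun k hk => (mem_filter.1 (hS hk)).2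
  · rw [hcim T]
    simp only [subset_iff, mem_filter, mem_univ, true_and]
end

section
/- If {G, H} is an addition, i.e., c_H = c_G + e_{S*} for some S* ⊆ [p] with |S*| ≥ 2, then the segment conv(c_G, c_H) is an edge (one-dimensional face) of CIM_p. -/
open scoped Classical

/-!
Both imsets are 0/1 vectors and they differ only in the coordinate `S*`. For 0/1 numbers `b, c`
one has `(2c - 1) b = c - (b - c)²`, so the functional `w` with `w_{S*} = 0` and
`w_T = 2 c_G(T) - 1` otherwise satisfies `⟪w, x⟫ = ⟪w, c_G⟫ - ∑_{T ≠ S*} (x_T - c_G(T))²` on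
0/1 vectors `x`. Among the vertices of `CIM_p` its maximizers are therefore exactly the 0/1
vectors agreeing with `c_G` off `S*`, namely `c_G` and `c_H`; and the face of a convex hull cut
out by a supporting hyperplane is the convex hull of the points of the set lying on it.
-/

section ExposedFace

variable {𝕜 E : Type*} [Field 𝕜] [LinearOrder 𝕜] [IsStrictOrderedRing 𝕜]
  [AddCommGroup E] [Module 𝕜 E] {l : E →ₗ[𝕜] 𝕜} {s : Set E} {a : 𝕜}

theorem le_of_mem_convexHull_of_forall_le (hs : ∀ x ∈ s, l x ≤ a) {x : E}
    (hx : x ∈ convexHull 𝕜 s) : l x ≤ a :=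
  convexHull_min hs (convex_halfSpace_le l.isLinear a) hx

theorem convexHull_sep_eq_of_forall_le (hs : ∀ x ∈ s, l x ≤ a) :
    {x ∈ convexHull 𝕜 s | l x = a} = convexHull 𝕜 {x ∈ s | l x = a} := by
  refine subset_antisymm ?_ (convexHull_min (fun x hx ↦ ⟨subset_convexHull 𝕜 s hx.1, hx.2⟩)
    ((convex_convexHull 𝕜 s).inter (convex_hyperplane l.isLinear a)))
  rintro _ ⟨hx, hlx⟩
  obtain ⟨ι, t, w, z, hw₀, hw₁, hz, rfl⟩ := (convexHull_eq s).subset hx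
  have hle : ∀ i ∈ t, w i * l (z i) ≤ w i * a :=
    fun i hi ↦ mul_le_mul_of_nonneg_left (hs _ (hz i hi)) (hw₀ i hi)
  have hsum : ∑ i ∈ t, w i * l (z i) = ∑ i ∈ t, w i * a := by
    rw [← Finset.sum_mul, hw₁, one_mul, ← hlx, Finset.centerMass_eq_of_sum_1 _ _ hw₁, map_sum]
    simp only [map_smul, smul_eq_mul]
  have heq := (Finset.sum_eq_sum_iff_of_le hle).1 hsum
  rw [← Finset.centerMass_filter_ne_zero]
  refine Finset.centerMass_mem_convexHull _ (fun i hi ↦ hw₀ i (Finset.mem_filter.1 hi).1)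
    (by rw [Finset.sum_filter_ne_zero, hw₁]; exact one_pos) fun i hi ↦ ?_
  obtain ⟨hi, hwi⟩ := Finset.mem_filter.1 hi
  exact ⟨hz i hi, mul_left_cancel₀ hwi (heq i hi)⟩

end ExposedFace

section ZeroOneVectors

variable {p : ℕ}

noncomputable def dotFₗ (w : Finset (Fin p) → ℝ) : (Finset (Fin p) → ℝ) →ₗ[ℝ] ℝ where
  toFun := dotF w
  map_add' x y := by simp only [dotF, Pi.add_apply, mul_add, Finset.sum_add_distrib]
  map_smul' c x := by simp only [dotF, Pi.smul_apply, smul_eq_mul, Finset.mul_sum, mul_left_comm,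
    RingHom.id_apply]

noncomputable def agreementWeight (u : Finset (Fin p) → ℝ) (S : Finset (Fin p)) :
    Finset (Fin p) → ℝ :=
  fun T ↦ if T = S then 0 else 2 * u T - 1

lemma mul_eq_sub_sq_of_zero_or_one {b c : ℝ} (hb : b = 0 ∨ b = 1) (hc : c = 0 ∨ c = 1) :
    (2 * c - 1) * b = c - (b - c) ^ 2 := by
  rcases hb with rfl | rfl <;> rcases hc with rfl | rfl <;> norm_num

lemma dotF_agreementWeight {u x : Finset (Fin p) → ℝ} (S : Finset (Fin p))
    (hu : ∀ T, u T = 0 ∨ u T = 1) (hx : ∀ T, x T = 0 ∨ x T = 1) :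
    dotF (agreementWeight u S) x =
      dotF (agreementWeight u S) u - ∑ T with T ≠ S, (x T - u T) ^ 2 := by
  rw [Finset.sum_filter, dotF, dotF, ← Finset.sum_sub_distrib]
  refine Finset.sum_congr rfl fun T _ ↦ ?_
  by_cases hT : T = S
  · simp [agreementWeight, hT]
  · simp only [agreementWeight, hT, if_false, ne_eq, not_false_eq_true, if_true]
    rw [mul_eq_sub_sq_of_zero_or_one (hx T) (hu T), mul_eq_sub_sq_of_zero_or_one (hu T) (hu T)]
    ring

lemma dotF_agreementWeight_eq_iff {u x : Finset (Fin p) → ℝ} (S : Finset (Fin p))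
    (hu : ∀ T, u T = 0 ∨ u T = 1) (hx : ∀ T, x T = 0 ∨ x T = 1) :
    dotF (agreementWeight u S) x = dotF (agreementWeight u S) u ↔ ∀ T ≠ S, x T = u T := by
  rw [dotF_agreementWeight S hu hx, sub_eq_self,
    Finset.sum_eq_zero_iff_of_nonneg fun T _ ↦ sq_nonneg _]
  simp [sub_eq_zero]

lemma eq_or_eq_of_eqOn_compl_singleton {α : Type*} {u v x : α → ℝ} {S : α}
    (hu : u S = 0 ∨ u S = 1) (hv : v S = 0 ∨ v S = 1) (hx : x S = 0 ∨ x S = 1) (huv : u ≠ v)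
    (hvu : ∀ T ≠ S, v T = u T) (hxu : ∀ T ≠ S, x T = u T) : x = u ∨ x = v := by
  have hS : u S ≠ v S := fun h ↦ huv <| funext fun T ↦ by
    rcases eq_or_ne T S with rfl | hT
    exacts [h, (hvu T hT).symm]
  have hxS : x S = u S ∨ x S = v S := by grind
  refine hxS.imp (fun h ↦ funext fun T ↦ ?_) fun h ↦ funext fun T ↦ ?_ <;>
    rcases eq_or_ne T S with rfl | hT
  exacts [h, hxu T hT, h, (hxu T hT).trans (hvu T hT).symm]

theorem isEdgeOf_convexHull_of_eqOn_compl_singleton {V : Set (Finset (Fin p) → ℝ)}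
    (hV : ∀ x ∈ V, ∀ T, x T = 0 ∨ x T = 1) {u v : Finset (Fin p) → ℝ} (hu : u ∈ V) (hv : v ∈ V)
    (huv : u ≠ v) {S : Finset (Fin p)} (hvu : ∀ T ≠ S, v T = u T) :
    IsEdgeOf u v (convexHull ℝ V) := by
  set w := agreementWeight u S
  have hmax : ∀ x ∈ V, dotFₗ w x ≤ dotF w u := fun x hx ↦ by
    change dotF w x ≤ _
    rw [dotF_agreementWeight S (hV u hu) (hV x hx)]
    exact sub_le_self _ (Finset.sum_nonneg fun T _ ↦ sq_nonneg _)
  have hface : {x ∈ V | dotFₗ w x = dotF w u} = {u, v} := by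
    ext x
    change x ∈ V ∧ dotF w x = dotF w u ↔ x = u ∨ x = v
    constructor
    · rintro ⟨hx, hxu⟩
      exact eq_or_eq_of_eqOn_compl_singleton (hV u hu S) (hV v hv S) (hV x hx S) huv hvu
        ((dotF_agreementWeight_eq_iff S (hV u hu) (hV x hx)).1 hxu)
    · rintro (rfl | rfl)
      · exact ⟨hu, rfl⟩
      · exact ⟨hv, (dotF_agreementWeight_eq_iff S (hV u hu) (hV x hv)).2 hvu⟩
  refine ⟨huv, w, dotF w u, fun x hx ↦ le_of_mem_convexHull_of_forall_le hmax hx, ?_⟩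
  rw [← convexHull_pair, ← hface, ← convexHull_sep_eq_of_forall_le hmax]
  rfl

lemma DAGraph.cim_eq_zero_or_one (G : DAGraph p) (S : Finset (Fin p)) :
    G.cim S = 0 ∨ G.cim S = 1 := by
  unfold DAGraph.cim imsetRel
  split_ifs <;> simp

end ZeroOneVectors

theorem stmt9_general {p : ℕ} (G H : DAGraph p) (Sstar : Finset (Fin p))
    (hadd : ∀ T : Finset (Fin p), H.cim T = G.cim T + (if T = Sstar then 1 else 0)) :
    IsEdgeOf G.cim H.cim (cimPolytope p) := by
  have hne : G.cim ≠ H.cim := fun h ↦ by simpa [h] using hadd Sstar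
  have hoff : ∀ T ≠ Sstar, H.cim T = G.cim T := fun T hT ↦ by simpa [hT] using hadd T
  refine isEdgeOf_convexHull_of_eqOn_compl_singleton ?_ ⟨G, rfl⟩ ⟨H, rfl⟩ hne hoff
  rintro _ ⟨K, rfl⟩
  exact K.cim_eq_zero_or_one

/-- If `{G, H}` is an addition, i.e. `c_H = c_G + e_{S*}` with `|S*| ≥ 2`,
then `conv(c_G, c_H)` is an edge of `CIM_p`. -/
theorem stmt9 {p : ℕ} (G H : DAGraph p) (Sstar : Finset (Fin p)) (hS : 2 ≤ Sstar.card)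
    (hadd : ∀ T : Finset (Fin p), H.cim T = G.cim T + (if T = Sstar then 1 else 0)) :
    IsEdgeOf G.cim H.cim (cimPolytope p) :=
  stmt9_general G H Sstar hadd
end

section
/- For the path graph I_p on p ≥ 2 vertices with edges {i, i+1}, the characteristic imset polytope CIM_{I_p} is affinely equivalent to the stable set polytope STAB(I_{p−2}) of the path on p−2 vertices, via the projection sending the coordinate indexed by {i−1, i, i+1} to coordinate i−1. -/
open scoped Classical

/-!
Off the triples `{k, k+1, k+2}`, the characteristic imset of a DAG with skeleton `I_p` does not
depend on the orientation: a set has a sink exactly when it is a vertex or an edge. So all of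
`CIM_{I_p}` lies in one affine subspace on which the projection to the triple coordinates is
injective. A triple coordinate records the v-structure `k → k+1 ← k+2`; the v-structure sets
are exactly the stable sets of `I_{p-2}`, since two consecutive ones would orient an edge both
ways, and every stable set is realised by orienting the path along a suitable ranking.
-/

open SimpleGraph

namespace DAGraph

variable {p : ℕ}

lemma E_asymm (D : DAGraph p) {a b : Fin p} (hab : D.E a b) : ¬ D.E b a := fun hba =>
  D.acyclic a (.head hab (.single hba))

/-- On a clique of the skeleton every pair is comparable for reachability, so a maximal element
for reachability is a sink. -/
lemma exists_sink_of_isClique (D : DAGraph p) {S : Finset (Fin p)} (hne : S.Nonempty)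
    (hS : D.skeleton.IsClique (S : Set (Fin p))) : ∃ i ∈ S, ∀ j ∈ S, j ≠ i → D.E j i := by
  let after : Fin p → Fin p → Prop := flip (Relation.TransGen D.E)
  have : IsTrans (Fin p) after := ⟨fun _ _ _ h₁ h₂ => h₂.trans h₁⟩
  have : Std.Irrefl after := ⟨D.acyclic⟩
  obtain ⟨i, hi, hmax⟩ :=
    (Finite.wellFounded_of_trans_of_irrefl after).has_min (S : Set (Fin p)) hne
  refine ⟨i, hi, fun j hj hji => ?_⟩
  rcases hS hj hi hji with hE | hE
  · exact hE
  · exact absurd (.single hE) (hmax j hj)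

def ofRank {β : Type*} [Preorder β] (G : SimpleGraph (Fin p)) (r : Fin p → β) : DAGraph p where
  E a b := G.Adj a b ∧ r a < r b
  acyclic i hi := by
    have h := Relation.TransGen.lift (p := ((· < ·) : β → β → Prop)) r (fun _ _ hab => hab.2) i i hi
    rw [Relation.transGen_eq_self] at h
    exact lt_irrefl _ h

lemma skeleton_ofRank {β : Type*} [LinearOrder β] (G : SimpleGraph (Fin p)) (r : Fin p → β)
    (hr : ∀ a b, G.Adj a b → r a ≠ r b) : (ofRank G r).skeleton = G := by
  ext a b
  refine ⟨fun h => h.elim (·.1) (·.1.symm), fun h => ?_⟩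
  rcases (hr a b h).lt_or_gt with hlt | hlt
  exacts [Or.inl ⟨h, hlt⟩, Or.inr ⟨h.symm, hlt⟩]

end DAGraph

lemma apply_eq_of_mem_convexHull {ι : Type*} {X : Set (ι → ℝ)} {i : ι} {c : ℝ}
    (h : ∀ x ∈ X, x i = c) {x : ι → ℝ} (hx : x ∈ convexHull ℝ X) : x i = c :=
  convexHull_min h (convex_hyperplane (LinearMap.proj i : (ι → ℝ) →ₗ[ℝ] ℝ).isLinear c) hx

namespace PathCIM

variable {p : ℕ}

def lo (k : Fin (p - 2)) : Fin p := ⟨k.1, by omega⟩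
def mid (k : Fin (p - 2)) : Fin p := ⟨k.1 + 1, by omega⟩
def hi (k : Fin (p - 2)) : Fin p := ⟨k.1 + 2, by omega⟩

def triple (k : Fin (p - 2)) : Finset (Fin p) := {lo k, mid k, hi k}

lemma mem_triple {k : Fin (p - 2)} {x : Fin p} : x ∈ triple k ↔ k.1 ≤ x.1 ∧ x.1 ≤ k.1 + 2 := by
  simp only [triple, lo, mid, hi, Finset.mem_insert, Finset.mem_singleton, Fin.ext_iff]
  omega

lemma mid_injective : Function.Injective (mid (p := p)) := fun a b h => by
  simpa [mid, Fin.ext_iff] using h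

section PathSkeleton

variable {D : DAGraph p} (hD : D.skeleton = pathGraph p)
include hD

lemma val_adj_of_E {a b : Fin p} (h : D.E a b) : a.1 + 1 = b.1 ∨ b.1 + 1 = a.1 :=
  pathGraph_adj.1 (hD ▸ Or.inl h)

lemma vStruct_iff (k : Fin (p - 2)) :
    D.vStruct (lo k) (mid k) (hi k) ↔ D.E (lo k) (mid k) ∧ D.E (hi k) (mid k) := by
  have hne : lo k ≠ hi k := by simp [lo, hi, Fin.ext_iff]
  have hnadj : ¬ D.skeleton.Adj (lo k) (hi k) := by
    rw [hD, pathGraph_adj]; simp only [lo, hi]; omega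
  simp [DAGraph.vStruct, hne, hnadj]

/-- The endpoints of a triple are not adjacent, so only the middle vertex can be its sink. -/
lemma sink_triple_iff (k : Fin (p - 2)) :
    (∃ i ∈ triple k, ∀ j ∈ triple k, j ≠ i → D.E j i) ↔ D.vStruct (lo k) (mid k) (hi k) := by
  rw [vStruct_iff hD]
  constructor
  · rintro ⟨i, hi_mem, hsink⟩
    have hadj (j) (hj : j ∈ triple k) : j.1 ≠ i.1 → j.1 + 1 = i.1 ∨ i.1 + 1 = j.1 :=
      fun hji => val_adj_of_E hD (hsink j hj (Fin.ne_of_val_ne hji))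
    have hlo := hadj (lo k) (by simp [triple])
    have hhi := hadj (hi k) (by simp [triple])
    have hval := mem_triple.1 hi_mem
    simp only [lo, hi] at hlo hhi
    obtain rfl : i = mid k := Fin.ext (by simp only [mid]; omega)
    exact ⟨hsink _ (by simp [triple]) (by simp [lo, mid, Fin.ext_iff]),
      hsink _ (by simp [triple]) (by simp [hi, mid, Fin.ext_iff])⟩
  · rintro ⟨hlo, hhi⟩
    refine ⟨mid k, by simp [triple], fun j hj hne => ?_⟩
    simp only [triple, Finset.mem_insert, Finset.mem_singleton] at hj
    rcases hj with rfl | rfl | rfl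
    exacts [hlo, absurd rfl hne, hhi]

lemma cim_triple (k : Fin (p - 2)) :
    D.cim (triple k) = if D.vStruct (lo k) (mid k) (hi k) then 1 else 0 :=
  if_congr (sink_triple_iff hD k) rfl rfl

/-- A sink with two parents in `S` would force `S` to be a full triple. -/
lemma sink_iff_isClique {S : Finset (Fin p)} (hS : ∀ k, S ≠ triple k) :
    (∃ i ∈ S, ∀ j ∈ S, j ≠ i → D.E j i) ↔
      S.Nonempty ∧ (pathGraph p).IsClique (S : Set (Fin p)) := by
  refine ⟨fun ⟨i, hi, hsink⟩ => ⟨⟨i, hi⟩, ?_⟩,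
    fun ⟨hne, hcl⟩ => D.exists_sink_of_isClique hne (hD ▸ hcl)⟩
  have hadj (j) (hj : j ∈ S) (hji : j ≠ i) : (pathGraph p).Adj j i :=
    hD ▸ Or.inl (hsink j hj hji)
  intro x hx y hy hxy
  rcases eq_or_ne x i with rfl | hxi
  · exact (hadj y hy hxy.symm).symm
  rcases eq_or_ne y i with rfl | hyi
  · exact hadj x hx hxy
  have hx' := pathGraph_adj.1 (hadj x hx hxi)
  have hy' := pathGraph_adj.1 (hadj y hy hyi)
  have hxy' := Fin.val_ne_of_ne hxy
  refine absurd (Finset.ext fun z => ?_) (hS ⟨i.1 - 1, by omega⟩)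
  rw [mem_triple]
  dsimp only
  constructor
  · intro hz
    rcases eq_or_ne z i with rfl | hzi
    · omega
    · have := pathGraph_adj.1 (hadj z hz hzi)
      omega
  · intro hz
    obtain rfl | rfl | rfl : z = x ∨ z = i ∨ z = y := by simp only [Fin.ext_iff]; omega
    exacts [hx, hi, hy]

lemma cim_of_forall_ne_triple {S : Finset (Fin p)} (hS : ∀ k, S ≠ triple k) :
    D.cim S = if S.Nonempty ∧ (pathGraph p).IsClique (S : Set (Fin p)) then 1 else 0 :=
  if_congr (sink_iff_isClique hD hS) rfl rfl

end PathSkeleton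

noncomputable def colliders (D : DAGraph p) : Finset (Fin (p - 2)) :=
  Finset.univ.filter fun k => D.vStruct (lo k) (mid k) (hi k)

/-- Consecutive v-structures `k` and `k + 1` would orient the edge `{k + 1, k + 2}` both ways. -/
lemma not_adj_of_mem_colliders {D : DAGraph p} (hD : D.skeleton = pathGraph p)
    {a b : Fin (p - 2)} (ha : a ∈ colliders D) (hb : b ∈ colliders D) :
    ¬ (pathGraph (p - 2)).Adj a b := by
  have key {a b : Fin (p - 2)} (ha : a ∈ colliders D) (hb : b ∈ colliders D)
      (hab : a.1 + 1 = b.1) : False := by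
    simp only [colliders, Finset.mem_filter, Finset.mem_univ, true_and, vStruct_iff hD] at ha hb
    have e₁ : lo b = mid a := Fin.ext (by simp [lo, mid]; omega)
    have e₂ : mid b = hi a := Fin.ext (by simp [mid, hi]; omega)
    exact D.E_asymm ha.2 (e₁ ▸ e₂ ▸ hb.1)
  rw [pathGraph_adj]
  rintro (hab | hab)
  exacts [key ha hb hab, key hb ha hab]

/-- Raising the middle vertex of each triple in `S` by `2` makes it a strict local maximum,
while adjacent vertices keep distinct ranks of different parity. -/
def bumpRank (S : Finset (Fin (p - 2))) (v : Fin p) : ℕ :=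
  v.1 + if v ∈ S.image mid then 2 else 0

def stableDAG (S : Finset (Fin (p - 2))) : DAGraph p :=
  DAGraph.ofRank (pathGraph p) (bumpRank S)

lemma skeleton_stableDAG (S : Finset (Fin (p - 2))) :
    (stableDAG S).skeleton = pathGraph p :=
  DAGraph.skeleton_ofRank _ _ fun a b hab => by
    rw [pathGraph_adj] at hab
    unfold bumpRank
    split_ifs <;> omega

lemma vStruct_stableDAG_iff {S : Finset (Fin (p - 2))}
    (hS : ∀ a ∈ S, ∀ b ∈ S, ¬ (pathGraph (p - 2)).Adj a b) (k : Fin (p - 2)) :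
    (stableDAG S).vStruct (lo k) (mid k) (hi k) ↔ k ∈ S := by
  rw [vStruct_iff (skeleton_stableDAG S)]
  have hmid : mid k ∈ S.image mid ↔ k ∈ S := mid_injective.mem_finset_image
  have hlo_mid : (pathGraph p).Adj (lo k) (mid k) := pathGraph_adj.2 (Or.inl rfl)
  have hhi_mid : (pathGraph p).Adj (hi k) (mid k) := pathGraph_adj.2 (Or.inr rfl)
  have hbounds (v : Fin p) : v.1 ≤ bumpRank S v ∧ bumpRank S v ≤ v.1 + 2 := by
    unfold bumpRank; split_ifs <;> omega
  have hlo := hbounds (lo k)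
  have hhi := hbounds (hi k)
  constructor
  · rintro ⟨-, -, hlt⟩
    by_contra hk
    have hmid_rank : bumpRank S (mid k) = k.1 + 1 := by
      rw [bumpRank, if_neg (hmid.not.2 hk)]; rfl
    have : (hi k).1 = k.1 + 2 := rfl
    omega
  · intro hk
    have hhi_not : hi k ∉ S.image mid := fun h => by
      obtain ⟨s, hs, hsk⟩ := Finset.mem_image.1 h
      refine hS k hk s hs (pathGraph_adj.2 (Or.inl ?_))
      simp only [mid, hi, Fin.ext_iff] at hsk
      omega
    have hmid_rank : bumpRank S (mid k) = k.1 + 3 := by rw [bumpRank, if_pos (hmid.2 hk)]; rfl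
    have hhi_rank : bumpRank S (hi k) = k.1 + 2 := by rw [bumpRank, if_neg hhi_not]; rfl
    have : (lo k).1 = k.1 := rfl
    exact ⟨⟨hlo_mid, by omega⟩, ⟨hhi_mid, by omega⟩⟩

def pathCims (p : ℕ) : Set (Finset (Fin p) → ℝ) :=
  {x | ∃ D : DAGraph p, D.skeleton = pathGraph p ∧ x = D.cim}

lemma funLeft_triple_image_pathCims :
    LinearMap.funLeft ℝ ℝ (triple (p := p)) '' pathCims p =
      {y | ∃ S : Finset (Fin (p - 2)), (∀ a ∈ S, ∀ b ∈ S, ¬ (pathGraph (p - 2)).Adj a b) ∧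
        y = fun v => if v ∈ S then (1 : ℝ) else 0} := by
  ext y
  constructor
  · rintro ⟨_, ⟨D, hD, rfl⟩, rfl⟩
    refine ⟨colliders D, fun a ha b hb => not_adj_of_mem_colliders hD ha hb, funext fun k => ?_⟩
    simp [cim_triple hD, colliders]
  · rintro ⟨S, hS, rfl⟩
    refine ⟨_, ⟨stableDAG S, skeleton_stableDAG S, rfl⟩, funext fun k => ?_⟩
    simp [cim_triple (skeleton_stableDAG S), vStruct_stableDAG_iff hS]

/-- Off the triples all characteristic imsets take the same value, hence so does every point of
their convex hull. -/
lemma injOn_funLeft_triple_convexHull_pathCims :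
    Set.InjOn (LinearMap.funLeft ℝ ℝ (triple (p := p))) (convexHull ℝ (pathCims p)) := by
  intro x hx y hy hxy
  funext S
  by_cases hS : ∃ k, S = triple k
  · obtain ⟨k, rfl⟩ := hS
    exact congrFun hxy k
  · have hconst {z} (hz : z ∈ convexHull ℝ (pathCims p)) := apply_eq_of_mem_convexHull
      (fun w (hw : w ∈ pathCims p) => by
        obtain ⟨D, hD, rfl⟩ := hw
        exact cim_of_forall_ne_triple hD (not_exists.1 hS)) hz
    rw [hconst hx, hconst hy]

end PathCIM

/-- For the path `I_p` on `p ≥ 2` vertices, `CIM_{I_p}` is affinely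
equivalent to the stable set polytope `STAB(I_{p−2})`, via the projection sending the
coordinate indexed by the triple `{i−1, i, i+1}` to coordinate `i−1`. -/
theorem stmt10 (p : ℕ)
    (ρ : (Finset (Fin p) → ℝ) → (Fin (p - 2) → ℝ))
    (hρ : ∀ (x : Finset (Fin p) → ℝ) (k : Fin (p - 2)),
      ρ x k = x {⟨k.1, by have := k.2; omega⟩, ⟨k.1 + 1, by have := k.2; omega⟩,
                  ⟨k.1 + 2, by have := k.2; omega⟩}) :
    ρ '' (convexHull ℝ
        {x | ∃ D : DAGraph p, D.skeleton = SimpleGraph.pathGraph p ∧ x = D.cim}) =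
      convexHull ℝ {y | ∃ S : Finset (Fin (p - 2)),
        (∀ a ∈ S, ∀ b ∈ S, ¬ (SimpleGraph.pathGraph (p - 2)).Adj a b) ∧
        y = fun v => if v ∈ S then (1 : ℝ) else 0} ∧
    Set.InjOn ρ (convexHull ℝ
        {x | ∃ D : DAGraph p, D.skeleton = SimpleGraph.pathGraph p ∧ x = D.cim}) := by
  obtain rfl : ρ = LinearMap.funLeft ℝ ℝ PathCIM.triple := funext fun x => funext (hρ x)
  refine ⟨?_, PathCIM.injOn_funLeft_triple_convexHull_pathCims⟩
  rw [LinearMap.image_convexHull]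
  exact congrArg _ PathCIM.funLeft_triple_image_pathCims
end

section
/- For any two DAGs G and H on [p] with the same skeleton, there exists a finite sequence of DAGs G = G₀, G₁, ..., G_{m+1} = H, all with the same skeleton, such that each consecutive pair {G_k, G_{k+1}} is either a pair of Markov equivalent DAGs or differs by the reversal of a single edge (i.e., G_{k+1} = (G_k)_{i←j} for some edge i → j of G_k whose reversal preserves acyclicity). -/
open scoped Classical

/-!
Reversing an edge `i → j` of a DAG keeps it acyclic unless some other directed path leads from
`i` to `j`. Among the edges of `G` that point against `H`, take one whose endpoints are closest
in the ancestor count of `G`. Another path from `i` to `j` cannot consist of edges agreeing with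
`H`, since together with `j → i` in `H` it would close a cycle of `H`; so it traverses some other
edge against `H`, squeezed strictly between `i` and `j`, contradicting the choice. Reversing the
chosen edge removes one disagreement, and induction on the number of disagreements finishes.
-/

open Relation

namespace Relation

variable {α : Type*} {r s : α → α → Prop} {a b : α}

theorem ReflTransGen.exists_seq (h : ReflTransGen r a b) :
    ∃ (m : ℕ) (f : ℕ → α), f 0 = a ∧ f m = b ∧ ∀ k < m, r (f k) (f (k + 1)) := by
  induction h using ReflTransGen.head_induction_on with
  | refl => exact ⟨0, fun _ => b, rfl, rfl, fun k hk => absurd hk k.not_lt_zero⟩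
  | @head c _ hc _ ih =>
    obtain ⟨m, f, hf0, hfm, hstep⟩ := ih
    refine ⟨m + 1, fun k => if k = 0 then c else f (k - 1), rfl, by simpa using hfm, ?_⟩
    rintro (_ | k) hk
    · simpa [hf0] using hc
    · simpa using hstep k (by omega)

theorem ReflTransGen.exists_reversed_edge (hrs : ∀ u v, r u v → s u v ∨ s v u)
    (h : ReflTransGen r a b) (hs : ¬ ReflTransGen s a b) :
    ∃ u v, r u v ∧ s v u ∧ ReflTransGen r a u ∧ ReflTransGen r v b := by
  induction h with
  | refl => exact absurd .refl hs
  | @tail c d hac hcd ih =>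
    by_cases hsac : ReflTransGen s a c
    · exact ⟨c, d, hcd, (hrs c d hcd).resolve_left fun h => hs (hsac.tail h), hac, .refl⟩
    · obtain ⟨u, v, huv, hvu, hau, hvc⟩ := ih hsac
      exact ⟨u, v, huv, hvu, hau, hvc.tail hcd⟩

end Relation

def eraseEdge {α : Type*} (E : α → α → Prop) (i j : α) : α → α → Prop :=
  fun a b => E a b ∧ ¬(a = i ∧ b = j)

theorem eraseEdge_le {α : Type*} (E : α → α → Prop) (i j : α) : eraseEdge E i j ≤ E :=
  fun _ _ => And.left

section Reversal

variable {p : ℕ} {E : Fin p → Fin p → Prop} {i j a b : Fin p}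

theorem transGen_reverseRel (h : TransGen (reverseRel E i j) a b) :
    TransGen (eraseEdge E i j) a b ∨
      ReflTransGen (eraseEdge E i j) a j ∧ ReflTransGen (eraseEdge E i j) i b := by
  induction h with
  | single h =>
    rcases h with h | ⟨rfl, rfl⟩
    · exact .inl (.single h)
    · exact .inr ⟨.refl, .refl⟩
  | tail _ h ih =>
    rcases h with h | ⟨rfl, rfl⟩
    · exact ih.imp (·.tail h) fun ⟨haj, hib⟩ => ⟨haj, hib.tail h⟩
    · exact .inr ⟨ih.elim (·.to_reflTransGen) And.left, .refl⟩

theorem acyclic_reverseRel (hE : ∀ a, ¬ TransGen E a a)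
    (hij : ¬ ReflTransGen (eraseEdge E i j) i j) (a : Fin p) :
    ¬ TransGen (reverseRel E i j) a a := by
  intro ha
  rcases transGen_reverseRel ha with h | ⟨haj, hia⟩
  · exact hE a (TransGen.mono (eraseEdge_le E i j) _ _ h)
  · exact hij (hia.trans haj)

end Reversal

namespace DAGraph

variable {p : ℕ} {G G' H : DAGraph p} {i j a b : Fin p}

def reverse (G : DAGraph p) (i j : Fin p) (h : ¬ ReflTransGen (eraseEdge G.E i j) i j) :
    DAGraph p :=
  ⟨reverseRel G.E i j, acyclic_reverseRel G.acyclic h⟩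

def IsEdgeReversal (G G' : DAGraph p) : Prop :=
  ∃ i j, G.E i j ∧ ∀ a b, G'.E a b ↔ reverseRel G.E i j a b

theorem IsEdgeReversal.skeleton_eq (h : G.IsEdgeReversal G') : G'.skeleton = G.skeleton := by
  obtain ⟨i, j, hij, hE⟩ := h
  ext a b
  change G'.E a b ∨ G'.E b a ↔ G.E a b ∨ G.E b a
  simp only [hE, reverseRel]
  constructor
  · rintro ((⟨h, -⟩ | ⟨rfl, rfl⟩) | (⟨h, -⟩ | ⟨rfl, rfl⟩))
    exacts [.inl h, .inr hij, .inr h, .inl hij]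
  · rintro (h | h)
    · by_cases hc : a = i ∧ b = j
      · exact .inr (.inr ⟨hc.2, hc.1⟩)
      · exact .inl (.inl ⟨h, hc⟩)
    · by_cases hc : b = i ∧ a = j
      · exact .inl (.inr ⟨hc.2, hc.1⟩)
      · exact .inr (.inl ⟨h, hc⟩)

theorem E_or_E_of_skeleton_eq (hsk : G.skeleton = H.skeleton) (h : G.E a b) :
    H.E a b ∨ H.E b a := by
  have : H.skeleton.Adj a b := hsk ▸ Or.inl h
  exact this

noncomputable def numAncestors (G : DAGraph p) (a : Fin p) : ℕ :=
  (Finset.univ.filter fun x => TransGen G.E x a).card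

theorem numAncestors_lt_of_transGen (h : TransGen G.E a b) :
    G.numAncestors a < G.numAncestors b := by
  refine Finset.card_lt_card ((Finset.ssubset_iff_of_subset fun x hx => ?_).2 ⟨a, ?_, ?_⟩)
  · simp only [Finset.mem_filter, Finset.mem_univ, true_and] at hx ⊢
    exact hx.trans h
  · simpa using h
  · simpa using G.acyclic a

theorem eq_or_numAncestors_lt (h : ReflTransGen G.E a b) :
    b = a ∨ G.numAncestors a < G.numAncestors b :=
  (reflTransGen_iff_eq_or_transGen.1 h).imp_right numAncestors_lt_of_transGen

noncomputable def disagreements (G H : DAGraph p) : Finset (Fin p × Fin p) :=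
  Finset.univ.filter fun q => G.E q.1 q.2 ∧ H.E q.2 q.1

theorem mem_disagreements {q : Fin p × Fin p} :
    q ∈ disagreements G H ↔ G.E q.1 q.2 ∧ H.E q.2 q.1 := by
  simp [disagreements]

theorem exists_reversible_disagreement (hsk : G.skeleton = H.skeleton)
    (hne : (disagreements G H).Nonempty) :
    ∃ i j, (i, j) ∈ disagreements G H ∧ ¬ ReflTransGen (eraseEdge G.E i j) i j := by
  obtain ⟨⟨i, j⟩, hij, hmin⟩ :=
    Finset.exists_min_image _ (fun q => G.numAncestors q.2 - G.numAncestors q.1) hne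
  refine ⟨i, j, hij, fun hpath => ?_⟩
  have hH : ¬ ReflTransGen H.E i j := fun h => H.acyclic j (.head' (mem_disagreements.1 hij).2 h)
  obtain ⟨u, v, ⟨huv, hne⟩, hvu, hiu, hvj⟩ :=
    hpath.exists_reversed_edge (fun u v h => E_or_E_of_skeleton_eq hsk h.1) hH
  have hmin : G.numAncestors j - G.numAncestors i ≤ G.numAncestors v - G.numAncestors u :=
    hmin (u, v) (mem_disagreements.2 ⟨huv, hvu⟩)
  have huv := numAncestors_lt_of_transGen (.single huv)
  -- `i ≤ u < v ≤ j` in ancestor count, so minimality forces `u = i` and `v = j`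
  rcases eq_or_numAncestors_lt (ReflTransGen.mono (eraseEdge_le _ i j) _ _ hiu) with rfl | hiu <;>
    rcases eq_or_numAncestors_lt (ReflTransGen.mono (eraseEdge_le _ _ _) _ _ hvj) with rfl | hvj
  · exact hne ⟨rfl, rfl⟩
  all_goals omega

theorem disagreements_reverse (hij : (i, j) ∈ disagreements G H)
    (h : ¬ ReflTransGen (eraseEdge G.E i j) i j) :
    disagreements (G.reverse i j h) H = (disagreements G H).erase (i, j) := by
  ext ⟨a, b⟩
  rw [Finset.mem_erase, mem_disagreements, mem_disagreements]
  change ((G.E a b ∧ ¬(a = i ∧ b = j)) ∨ (a = j ∧ b = i)) ∧ H.E b a ↔ _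
  constructor
  · rintro ⟨⟨hab, hne⟩ | ⟨rfl, rfl⟩, hba⟩
    · exact ⟨fun he => hne (Prod.mk.inj he), hab, hba⟩
    · exact absurd ((TransGen.single (mem_disagreements.1 hij).2).tail hba) (H.acyclic _)
  · rintro ⟨hne, hab, hba⟩
    exact ⟨.inl ⟨hab, fun ⟨hai, hbj⟩ => hne (by rw [hai, hbj])⟩, hba⟩

theorem eq_of_disagreements_eq_empty (hsk : G.skeleton = H.skeleton)
    (h : disagreements G H = ∅) : G = H := by
  have hnot (a b : Fin p) (hab : G.E a b) (hba : H.E b a) : False :=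
    Finset.eq_empty_iff_forall_notMem.1 h (a, b) (mem_disagreements.2 ⟨hab, hba⟩)
  have hE : G.E = H.E := by
    funext a b
    refine propext ⟨fun hab => ?_, fun hab => ?_⟩
    · exact (E_or_E_of_skeleton_eq hsk hab).resolve_right (hnot a b hab)
    · exact (E_or_E_of_skeleton_eq hsk.symm hab).resolve_right fun hba => hnot b a hba hab
  cases G; cases H
  subst hE
  rfl

theorem reflTransGen_isEdgeReversal {G : DAGraph p} (hsk : G.skeleton = H.skeleton) :
    ReflTransGen IsEdgeReversal G H := by
  rcases (disagreements G H).eq_empty_or_nonempty with h | hne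
  · rw [eq_of_disagreements_eq_empty hsk h]
  · obtain ⟨i, j, hij, hrev⟩ := exists_reversible_disagreement hsk hne
    have hstep : G.IsEdgeReversal (G.reverse i j hrev) :=
      ⟨i, j, (mem_disagreements.1 hij).1, fun _ _ => Iff.rfl⟩
    exact .head hstep (reflTransGen_isEdgeReversal (hstep.skeleton_eq.trans hsk))
termination_by (disagreements G H).card
decreasing_by
  rw [disagreements_reverse hij]
  exact Finset.card_erase_lt_of_mem hij

end DAGraph

/-- Any two DAGs `G`, `H` with the same skeleton are connected by a
finite sequence of DAGs, all with the same skeleton, in which consecutive DAGs are either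
Markov equivalent (equal characteristic imsets) or differ by the reversal of a single edge
(the reversal preserving acyclicity, since each member of the sequence is a DAG). -/
theorem stmt19 {p : ℕ} (G H : DAGraph p) (hsk : G.skeleton = H.skeleton) :
    ∃ (m : ℕ) (f : ℕ → DAGraph p), f 0 = G ∧ f m = H ∧
      (∀ k ≤ m, (f k).skeleton = G.skeleton) ∧
      ∀ k < m, (f k).cim = (f (k + 1)).cim ∨
        ∃ i j : Fin p, (f k).E i j ∧
          ∀ a b, (f (k + 1)).E a b ↔ reverseRel (f k).E i j a b := by
  obtain ⟨m, f, hf0, hfm, hstep⟩ := (DAGraph.reflTransGen_isEdgeReversal hsk).exists_seq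
  refine ⟨m, f, hf0, hfm, fun k hk => ?_, fun k hk => .inr (hstep k hk)⟩
  induction k with
  | zero => rw [hf0]
  | succ k ih => rw [(hstep k (by omega)).skeleton_eq, ih (by omega)]
end
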